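/- arXiv:2506.14708 — 2 statements merged into one kernel-verified Lean document; each statement's English description precedes it below -/
import Mathlib

section
/- For (s̲₁,s̲₂,s̄₁,s̄₂) ∈ 𝔻 and i ∈ {−1,0,1} the no-transaction zone for the first asset decomposes as t^{(0,i)}(s̲₁,s̲₂,s̄₁,s̄₂) = ⋃_{s ∈ [s̲₁,s̄₁]} t^{(0,i)}(s,s̲₂,s,s̄₂). -/
open Set

/-- Membership of a price quadruple (s̲₁,s̲₂,s̄₁,s̄₂) in the domain 𝔻. -/
def memD (s1 s2 b1 b2 : ℝ) : Prop := 0 < s1 ∧ s1 ≤ b1 ∧ 0 < s2 ∧ s2 ≤ b2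

/-- Admissible strategies 𝔸(x,y₁,y₂,s̲₁,s̲₂,s̄₁,s̄₂); an element q = (l₁,l₂,m₁,m₂). -/
def A (x y1 y2 s1 s2 b1 b2 : ℝ) : Set (ℝ × ℝ × ℝ × ℝ) :=
  {q | 0 ≤ q.1 ∧ 0 ≤ q.2.1 ∧ 0 ≤ q.2.2.1 ∧ 0 ≤ q.2.2.2 ∧
       0 ≤ x + s1 * q.2.2.1 + s2 * q.2.2.2 - b1 * q.1 - b2 * q.2.1 ∧
       0 ≤ y1 - q.2.2.1 + q.1 ∧ 0 ≤ y2 - q.2.2.2 + q.2.1 ∧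
       q.2.2.1 ≤ y1 ∧ q.2.2.2 ≤ y2}

/-- The function φ: utility of the post-transaction position, where g is the (static) utility. -/
noncomputable def phi (g : ℝ → ℝ → ℝ → ℝ) (x y1 y2 s1 s2 b1 b2 : ℝ)
    (q : ℝ × ℝ × ℝ × ℝ) : ℝ :=
  g (x + s1 * q.2.2.1 + s2 * q.2.2.2 - b1 * q.1 - b2 * q.2.1)
    (y1 - q.2.2.1 + q.1) (y2 - q.2.2.2 + q.2.1)

/-- The static value function Φ = sup of φ over admissible strategies. -/
noncomputable def Phi (g : ℝ → ℝ → ℝ → ℝ) (x y1 y2 s1 s2 b1 b2 : ℝ) : ℝ :=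
  sSup (phi g x y1 y2 s1 s2 b1 b2 '' A x y1 y2 s1 s2 b1 b2)

/-- The set 𝔸^{(i₁,i₂)}: admissible strategies with prescribed signs of l₁−m₁, l₂−m₂ and
no simultaneous buy-and-sell. -/
def Asgn (i1 i2 : ℝ) (x y1 y2 s1 s2 b1 b2 : ℝ) : Set (ℝ × ℝ × ℝ × ℝ) :=
  {q | q ∈ A x y1 y2 s1 s2 b1 b2 ∧ i1 = Real.sign (q.1 - q.2.2.1) ∧
       i2 = Real.sign (q.2.1 - q.2.2.2) ∧ q.1 * q.2.2.1 + q.2.1 * q.2.2.2 = 0}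

/-- The trading set 𝐭^{(i₁,i₂)}(s̲₁,s̲₂,s̄₁,s̄₂) ⊆ ℝ₊ × ℝ₊². -/
def tset (g : ℝ → ℝ → ℝ → ℝ) (i1 i2 s1 s2 b1 b2 : ℝ) : Set (ℝ × ℝ × ℝ) :=
  {v | 0 ≤ v.1 ∧ 0 ≤ v.2.1 ∧ 0 ≤ v.2.2 ∧
       ∃ q ∈ Asgn i1 i2 v.1 v.2.1 v.2.2 s1 s2 b1 b2,
         Phi g v.1 v.2.1 v.2.2 s1 s2 b1 b2 = phi g v.1 v.2.1 v.2.2 s1 s2 b1 b2 q}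

/-- The parameter domain ℝ₊ × ℝ₊² × 𝔻, as a subset of ℝ⁷;
a point is p = (x, y₁, y₂, s̲₁, s̲₂, s̄₁, s̄₂). -/
def Param : Set (ℝ × ℝ × ℝ × ℝ × ℝ × ℝ × ℝ) :=
  {p | 0 ≤ p.1 ∧ 0 ≤ p.2.1 ∧ 0 ≤ p.2.2.1 ∧
       memD p.2.2.2.1 p.2.2.2.2.1 p.2.2.2.2.2.1 p.2.2.2.2.2.2}

/-- 𝔸 as a function of the bundled parameter. -/
def AP (p : ℝ × ℝ × ℝ × ℝ × ℝ × ℝ × ℝ) : Set (ℝ × ℝ × ℝ × ℝ) :=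
  A p.1 p.2.1 p.2.2.1 p.2.2.2.1 p.2.2.2.2.1 p.2.2.2.2.2.1 p.2.2.2.2.2.2

/-- φ as a function of the bundled parameter. -/
noncomputable def phiP (g : ℝ → ℝ → ℝ → ℝ) (p : ℝ × ℝ × ℝ × ℝ × ℝ × ℝ × ℝ)
    (q : ℝ × ℝ × ℝ × ℝ) : ℝ :=
  phi g p.1 p.2.1 p.2.2.1 p.2.2.2.1 p.2.2.2.2.1 p.2.2.2.2.2.1 p.2.2.2.2.2.2 q

/-- Φ as a function of the bundled parameter. -/
noncomputable def PhiP (g : ℝ → ℝ → ℝ → ℝ) (p : ℝ × ℝ × ℝ × ℝ × ℝ × ℝ × ℝ) : ℝ :=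
  Phi g p.1 p.2.1 p.2.2.1 p.2.2.2.1 p.2.2.2.2.1 p.2.2.2.2.2.1 p.2.2.2.2.2.2

/-! Let `q` trade no asset 1 and be optimal at the spread `[s̲₁, s̄₁]`, with value `M`. At a
frictionless price `s`, a sale and a purchase of asset 1 that both beat `M` cannot coexist: by
concavity the right mixture of them beats `M` without trading asset 1. Prices admitting an
improving sale are up-closed and those admitting an improving purchase down-closed, and both
sets are open, again by concavity, mixing an improving plan with a feasible one that wastes
some wealth. Neither contains `s̲₁` resp. `s̄₁`, so by connectedness of `[s̲₁, s̄₁]` some price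
in it admits no improving trade at all, and `q` is optimal there. Conversely, a frictionless
price inside the spread only improves every strategy, so optimality of `q` survives widening
the spread. -/

theorem ConcaveOn.exists_lt_apply_combo {E : Type*} [AddCommGroup E] [Module ℝ E] {s : Set E}
    {f : E → ℝ} (hf : ConcaveOn ℝ s f) {a b : E} (ha : a ∈ s) (hb : b ∈ s) {M : ℝ}
    (hM : M < f a) : ∃ ρ ∈ Ioo (0 : ℝ) 1, M < f ((1 - ρ) • a + ρ • b) := by
  have hlim : Filter.Tendsto (fun ρ : ℝ => (1 - ρ) * f a + ρ * f b) (nhdsWithin 0 (Ioi 0))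
      (nhds (f a)) := by
    have hcont : Continuous fun ρ : ℝ => (1 - ρ) * f a + ρ * f b := by fun_prop
    simpa using (hcont.tendsto 0).mono_left nhdsWithin_le_nhds
  obtain ⟨ρ, hρM, hρ⟩ := ((hlim.eventually (lt_mem_nhds hM)).and (Ioo_mem_nhdsGT one_pos)).exists
  exact ⟨ρ, hρ, hρM.trans_le (hf.2 ha hb (by linarith [hρ.2]) hρ.1.le (by ring))⟩

namespace ShadowPrice

def uncurry3 (g : ℝ → ℝ → ℝ → ℝ) (v : ℝ × ℝ × ℝ) : ℝ := g v.1 v.2.1 v.2.2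

/-- The position reached from `v` by paying `c` for `n` units of asset 1, and buying `l₂` and
selling `m₂` units of asset 2 at the prices `b₂` and `s₂`. -/
def pos (v : ℝ × ℝ × ℝ) (s2 b2 c n l2 m2 : ℝ) : ℝ × ℝ × ℝ :=
  (v.1 - c + s2 * m2 - b2 * l2, v.2.1 + n, v.2.2 - m2 + l2)

def Feasible (v : ℝ × ℝ × ℝ) (s2 b2 c n l2 m2 : ℝ) : Prop :=
  0 ≤ l2 ∧ 0 ≤ m2 ∧ m2 ≤ v.2.2 ∧ 0 ≤ pos v s2 b2 c n l2 m2

def Improves (u : ℝ × ℝ × ℝ → ℝ) (v : ℝ × ℝ × ℝ) (s2 b2 M c n : ℝ) : Prop :=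
  ∃ l2 m2, Feasible v s2 b2 c n l2 m2 ∧ M < u (pos v s2 b2 c n l2 m2)

def SellImproves (u : ℝ × ℝ × ℝ → ℝ) (v : ℝ × ℝ × ℝ) (s2 b2 M s : ℝ) : Prop :=
  ∃ n < 0, Improves u v s2 b2 M (s * n) n

def BuyImproves (u : ℝ × ℝ × ℝ → ℝ) (v : ℝ × ℝ × ℝ) (s2 b2 M s : ℝ) : Prop :=
  ∃ n > 0, Improves u v s2 b2 M (s * n) n

section Plans

variable {u : ℝ × ℝ × ℝ → ℝ} {v : ℝ × ℝ × ℝ} {s2 b2 M c n l2 m2 c' n' l2' m2' a b : ℝ}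

lemma pos_combo (hab : a + b = 1) :
    a • pos v s2 b2 c n l2 m2 + b • pos v s2 b2 c' n' l2' m2' =
      pos v s2 b2 (a * c + b * c') (a * n + b * n') (a * l2 + b * l2') (a * m2 + b * m2') := by
  simp only [pos, Prod.smul_mk, Prod.mk_add_mk, smul_eq_mul, Prod.mk.injEq]
  refine ⟨?_, ?_, ?_⟩
  · linear_combination v.1 * hab
  · linear_combination v.2.1 * hab
  · linear_combination v.2.2 * hab

lemma pos_le_pos (hc : c' ≤ c) : pos v s2 b2 c n l2 m2 ≤ pos v s2 b2 c' n l2 m2 :=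
  ⟨by simp only [pos]; linarith, le_rfl, le_rfl⟩

lemma Feasible.of_le (h : Feasible v s2 b2 c n l2 m2) (hc : c' ≤ c) :
    Feasible v s2 b2 c' n l2 m2 :=
  ⟨h.1, h.2.1, h.2.2.1, h.2.2.2.trans (pos_le_pos hc)⟩

lemma Feasible.combo (h : Feasible v s2 b2 c n l2 m2) (h' : Feasible v s2 b2 c' n' l2' m2')
    (ha : 0 ≤ a) (hb : 0 ≤ b) (hab : a + b = 1) :
    Feasible v s2 b2 (a * c + b * c') (a * n + b * n') (a * l2 + b * l2') (a * m2 + b * m2') := by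
  refine ⟨add_nonneg (mul_nonneg ha h.1) (mul_nonneg hb h'.1),
    add_nonneg (mul_nonneg ha h.2.1) (mul_nonneg hb h'.2.1), ?_, ?_⟩
  · calc a * m2 + b * m2' ≤ a * v.2.2 + b * v.2.2 :=
          add_le_add (mul_le_mul_of_nonneg_left h.2.2.1 ha) (mul_le_mul_of_nonneg_left h'.2.2.1 hb)
      _ = v.2.2 := by linear_combination v.2.2 * hab
  · rw [← pos_combo hab]
    exact convex_Ici (0 : ℝ × ℝ × ℝ) h.2.2.2 h'.2.2.2 ha hb hab

lemma Improves.add_nonneg (h : Improves u v s2 b2 M c n) : 0 ≤ v.2.1 + n := by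
  obtain ⟨l2, m2, hf, -⟩ := h
  exact hf.2.2.2.2.1

lemma Improves.of_le (hu : MonotoneOn u (Ici 0)) (h : Improves u v s2 b2 M c n) (hc : c' ≤ c) :
    Improves u v s2 b2 M c' n := by
  obtain ⟨l2, m2, hf, hM⟩ := h
  exact ⟨l2, m2, hf.of_le hc, hM.trans_le (hu hf.2.2.2 (hf.of_le hc).2.2.2 (pos_le_pos hc))⟩

lemma Improves.combo (hu : ConcaveOn ℝ (Ici 0) u) (h : Improves u v s2 b2 M c n)
    (h' : Improves u v s2 b2 M c' n') (ha : 0 ≤ a) (hb : 0 ≤ b) (hab : a + b = 1) :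
    Improves u v s2 b2 M (a * c + b * c') (a * n + b * n') := by
  obtain ⟨l2, m2, hf, hM⟩ := h
  obtain ⟨l2', m2', hf', hM'⟩ := h'
  refine ⟨_, _, hf.combo hf' ha hb hab, ?_⟩
  rw [← pos_combo hab]
  calc M < a * u (pos v s2 b2 c n l2 m2) + b * u (pos v s2 b2 c' n' l2' m2') := by
        have hM_eq : a * M + b * M = M := by linear_combination M * hab
        rcases ha.eq_or_lt with rfl | ha'
        · simp_all
        · linarith [mul_lt_mul_of_pos_left hM ha', mul_le_mul_of_nonneg_left hM'.le hb]
    _ ≤ _ := hu.2 hf.2.2.2 hf'.2.2.2 ha hb hab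

lemma Improves.exists_combo (hu : ConcaveOn ℝ (Ici 0) u) (h : Improves u v s2 b2 M c n)
    (h' : Feasible v s2 b2 c' n' l2' m2') :
    ∃ ρ ∈ Ioo (0 : ℝ) 1, Improves u v s2 b2 M ((1 - ρ) * c + ρ * c') ((1 - ρ) * n + ρ * n') := by
  obtain ⟨l2, m2, hf, hM⟩ := h
  obtain ⟨ρ, hρ, hρM⟩ := hu.exists_lt_apply_combo hf.2.2.2 h'.2.2.2 hM
  rw [pos_combo (by ring)] at hρM
  exact ⟨ρ, hρ, _, _, hf.combo h' (by linarith [hρ.2]) hρ.1.le (by ring), hρM⟩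

lemma SellImproves.mono (hu : MonotoneOn u (Ici 0)) {s s' : ℝ}
    (h : SellImproves u v s2 b2 M s) (hs : s ≤ s') : SellImproves u v s2 b2 M s' := by
  obtain ⟨n, hn, hi⟩ := h
  exact ⟨n, hn, hi.of_le hu (by nlinarith)⟩

lemma BuyImproves.anti (hu : MonotoneOn u (Ici 0)) {s s' : ℝ}
    (h : BuyImproves u v s2 b2 M s) (hs : s' ≤ s) : BuyImproves u v s2 b2 M s' := by
  obtain ⟨n, hn, hi⟩ := h
  exact ⟨n, hn, hi.of_le hu (by nlinarith)⟩

lemma not_sellImproves_and_buyImproves (hu : ConcaveOn ℝ (Ici 0) u)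
    (h0 : ¬ Improves u v s2 b2 M 0 0) {s : ℝ} :
    ¬ (SellImproves u v s2 b2 M s ∧ BuyImproves u v s2 b2 M s) := by
  rintro ⟨⟨n, hn, hsell⟩, ⟨n', hn', hbuy⟩⟩
  have hd : 0 < n' - n := by linarith
  -- the mixture of the sale and the purchase that leaves asset 1 unchanged
  have hmix := hsell.combo hu hbuy (a := n' / (n' - n)) (b := -n / (n' - n)) (by positivity)
    (div_nonneg (by linarith) hd.le) (by field_simp; ring)
  exact h0 (by convert hmix using 1 <;> field_simp <;> ring)

lemma SellImproves.exists_lt (hu : ConcaveOn ℝ (Ici 0) u) (hmono : MonotoneOn u (Ici 0))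
    (hv : 0 ≤ v) {s : ℝ} (hs : 0 < s) (h : SellImproves u v s2 b2 M s) :
    ∃ s' ∈ Ioo 0 s, SellImproves u v s2 b2 M s' := by
  obtain ⟨n, hn, hi⟩ := h
  -- the same sale with all cash thrown away: mixing it in lowers the sale price
  have hcash : Feasible v s2 b2 v.1 n 0 0 :=
    ⟨le_rfl, le_rfl, hv.2.2, by
      simp only [pos]
      exact ⟨by simp, hi.add_nonneg, by simpa using hv.2.2⟩⟩
  obtain ⟨ρ, ⟨hρ0, hρ1⟩, hmix⟩ := hi.exists_combo hu hcash
  refine ⟨(1 - ρ) * s, ⟨by nlinarith, by nlinarith⟩, n, hn, ?_⟩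
  rw [show (1 - ρ) * n + ρ * n = n by ring] at hmix
  exact hmix.of_le hmono (by nlinarith [mul_nonneg hρ0.le hv.1])

lemma BuyImproves.exists_gt (hu : ConcaveOn ℝ (Ici 0) u) (hv : 0 ≤ v.2.1) {s : ℝ} (hs : 0 < s)
    (h : BuyImproves u v s2 b2 M s) : ∃ s' > s, BuyImproves u v s2 b2 M s' := by
  obtain ⟨n, hn, l2, m2, hf, hM⟩ := h
  -- paying for the purchase without receiving it: mixing it in raises the purchase price
  have hnobuy : Feasible v s2 b2 (s * n) 0 l2 m2 :=
    ⟨hf.1, hf.2.1, hf.2.2.1, hf.2.2.2.1, by simpa [pos] using hv, hf.2.2.2.2.2⟩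
  obtain ⟨ρ, ⟨hρ0, hρ1⟩, hmix⟩ := Improves.exists_combo hu ⟨l2, m2, hf, hM⟩ hnobuy
  have hρ : 0 < 1 - ρ := by linarith
  refine ⟨s / (1 - ρ), ?_, (1 - ρ) * n, by positivity, ?_⟩
  · exact (lt_div_iff₀ hρ).2 (by nlinarith)
  · convert hmix using 1 <;> field_simp <;> ring

lemma isOpen_setOf_sellImproves (hu : ConcaveOn ℝ (Ici 0) u) (hmono : MonotoneOn u (Ici 0))
    (hv : 0 ≤ v) : IsOpen {s | 0 < s ∧ SellImproves u v s2 b2 M s} := by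
  refine isOpen_iff_mem_nhds.2 fun s ⟨hs, hsell⟩ => ?_
  obtain ⟨s', ⟨hs', hs's⟩, hsell'⟩ := hsell.exists_lt hu hmono hv hs
  filter_upwards [Ioi_mem_nhds hs's] with t ht
  exact ⟨hs'.trans ht, hsell'.mono hmono (le_of_lt ht)⟩

lemma isOpen_setOf_buyImproves (hu : ConcaveOn ℝ (Ici 0) u) (hmono : MonotoneOn u (Ici 0))
    (hv : 0 ≤ v.2.1) : IsOpen {s | 0 < s ∧ BuyImproves u v s2 b2 M s} := by
  refine isOpen_iff_mem_nhds.2 fun s ⟨hs, hbuy⟩ => ?_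
  obtain ⟨s', hss', hbuy'⟩ := hbuy.exists_gt hu hv hs
  filter_upwards [Ioo_mem_nhds hs hss'] with t ht
  exact ⟨ht.1, hbuy'.anti hmono ht.2.le⟩

lemma exists_shadowPrice (hu : ConcaveOn ℝ (Ici 0) u) (hmono : MonotoneOn u (Ici 0))
    (hv : 0 ≤ v) {s1 b1 : ℝ} (hs1 : 0 < s1) (hsb : s1 ≤ b1) (h0 : ¬ Improves u v s2 b2 M 0 0)
    (hsell : ¬ SellImproves u v s2 b2 M s1) (hbuy : ¬ BuyImproves u v s2 b2 M b1) :
    ∃ s ∈ Icc s1 b1, ¬ SellImproves u v s2 b2 M s ∧ ¬ BuyImproves u v s2 b2 M s := by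
  by_contra! hcover
  have hsub : Icc s1 b1 ⊆ {s | 0 < s ∧ SellImproves u v s2 b2 M s} ∪
      {s | 0 < s ∧ BuyImproves u v s2 b2 M s} := fun s hs => by
    by_cases hS : SellImproves u v s2 b2 M s
    exacts [Or.inl ⟨hs1.trans_le hs.1, hS⟩, Or.inr ⟨hs1.trans_le hs.1, hcover s hs hS⟩]
  have hdisj : Disjoint {s | 0 < s ∧ SellImproves u v s2 b2 M s}
      {s | 0 < s ∧ BuyImproves u v s2 b2 M s} :=
    Set.disjoint_left.2 fun s hS hB => not_sellImproves_and_buyImproves hu h0 ⟨hS.2, hB.2⟩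
  have hb1 : b1 ∈ Icc s1 b1 ∩ {s | 0 < s ∧ SellImproves u v s2 b2 M s} :=
    ⟨right_mem_Icc.2 hsb, hs1.trans_le hsb,
      by_contra fun hS => hbuy (hcover b1 (right_mem_Icc.2 hsb) hS)⟩
  exact hsell (isPreconnected_Icc.subset_left_of_subset_union
    (isOpen_setOf_sellImproves hu hmono hv) (isOpen_setOf_buyImproves hu hmono hv.2.1) hdisj hsub
    ⟨b1, hb1⟩ (left_mem_Icc.2 hsb)).2

lemma not_improves_of_shadowPrice (h0 : ¬ Improves u v s2 b2 M 0 0) {s : ℝ}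
    (hsell : ¬ SellImproves u v s2 b2 M s) (hbuy : ¬ BuyImproves u v s2 b2 M s) (n : ℝ) :
    ¬ Improves u v s2 b2 M (s * n) n := by
  intro h
  rcases lt_trichotomy n 0 with hn | rfl | hn
  exacts [hsell ⟨n, hn, h⟩, h0 (by simpa using h), hbuy ⟨n, hn, h⟩]

end Plans

section TradingSets

variable {g : ℝ → ℝ → ℝ → ℝ} {x y1 y2 s1 s2 b1 b2 : ℝ}

lemma monotoneOn_uncurry3
    (hg1 : ∀ a aQ b c : ℝ, 0 ≤ a → 0 ≤ b → 0 ≤ c → a < aQ → g a b c < g aQ b c)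
    (hg2 : ∀ a b bQ c : ℝ, 0 ≤ a → 0 ≤ b → 0 ≤ c → b < bQ → g a b c < g a bQ c)
    (hg3 : ∀ a b c cQ : ℝ, 0 ≤ a → 0 ≤ b → 0 ≤ c → c < cQ → g a b c < g a b cQ) :
    MonotoneOn (uncurry3 g) (Ici 0) := by
  rintro ⟨a, b, c⟩ ⟨ha, hb, hc⟩ ⟨a', b', c'⟩ - ⟨h1, h2, h3⟩
  have m1 : StrictMonoOn (g · b c) (Ici 0) := fun p hp q _ hpq => hg1 p q b c hp hb hc hpq
  have m2 : StrictMonoOn (g a' · c) (Ici 0) :=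
    fun p hp q _ hpq => hg2 a' p q c (ha.trans h1) hp hc hpq
  have m3 : StrictMonoOn (g a' b' ·) (Ici 0) :=
    fun p hp q _ hpq => hg3 a' b' p q (ha.trans h1) (hb.trans h2) hp hpq
  calc g a b c ≤ g a' b c := m1.monotoneOn ha (ha.trans h1) h1
    _ ≤ g a' b' c := m2.monotoneOn hb (hb.trans h2) h2
    _ ≤ g a' b' c' := m3.monotoneOn hc (hc.trans h3) h3

lemma phi_eq (q : ℝ × ℝ × ℝ × ℝ) : phi g x y1 y2 s1 s2 b1 b2 q = uncurry3 g
    (pos (x, y1, y2) s2 b2 (b1 * q.1 - s1 * q.2.2.1) (q.1 - q.2.2.1) q.2.1 q.2.2.2) := by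
  simp only [phi, uncurry3, pos]
  congr 1 <;> ring

lemma mem_A_iff {q : ℝ × ℝ × ℝ × ℝ} : q ∈ A x y1 y2 s1 s2 b1 b2 ↔
    0 ≤ q.1 ∧ 0 ≤ q.2.2.1 ∧ q.2.2.1 ≤ y1 ∧
      Feasible (x, y1, y2) s2 b2 (b1 * q.1 - s1 * q.2.2.1) (q.1 - q.2.2.1) q.2.1 q.2.2.2 := by
  simp only [A, Feasible, pos, Prod.le_def, Prod.fst_zero, Prod.snd_zero]
  constructor
  · rintro ⟨hl1, hl2, hm1, hm2, hcash, hy1, hy2, hm1y, hm2y⟩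
    exact ⟨hl1, hm1, hm1y, hl2, hm2, hm2y, by linarith, by linarith, by linarith⟩
  · rintro ⟨hl1, hm1, hm1y, hl2, hm2, hm2y, hcash, hy1, hy2⟩
    exact ⟨hl1, hl2, hm1, hm2, by linarith, by linarith, by linarith, hm1y, hm2y⟩

lemma bddAbove_phi_image (hmono : MonotoneOn (uncurry3 g) (Ici 0)) (hx : 0 ≤ x) (hy1 : 0 ≤ y1)
    (hy2 : 0 ≤ y2) (hD : memD s1 s2 b1 b2) :
    BddAbove (phi g x y1 y2 s1 s2 b1 b2 '' A x y1 y2 s1 s2 b1 b2) := by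
  obtain ⟨hs1, hs1b, hs2, hs2b⟩ := hD
  have hb1 : 0 < b1 := hs1.trans_le hs1b
  have hb2 : 0 < b2 := hs2.trans_le hs2b
  -- the wealth after liquidating both assets at the bid prices
  set K := x + s1 * y1 + s2 * y2 with hK
  refine ⟨g K (y1 + K / b1) (y2 + K / b2), ?_⟩
  rintro _ ⟨⟨l1, l2, m1, m2⟩, ⟨hl1, hl2, hm1, hm2, hcash, hh1, hh2, hm1y, hm2y⟩, rfl⟩
  dsimp only at *
  have hs1m := mul_le_mul_of_nonneg_left hm1y hs1.le
  have hs2m := mul_le_mul_of_nonneg_left hm2y hs2.le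
  have hl1K : l1 ≤ K / b1 := (le_div_iff₀' hb1).2 (by nlinarith [mul_nonneg hb2.le hl2])
  have hl2K : l2 ≤ K / b2 := (le_div_iff₀' hb2).2 (by nlinarith [mul_nonneg hb1.le hl1])
  exact hmono (a := (x + s1 * m1 + s2 * m2 - b1 * l1 - b2 * l2, y1 - m1 + l1, y2 - m2 + l2))
    (b := (K, y1 + K / b1, y2 + K / b2)) ⟨hcash, hh1, hh2⟩
    ⟨by positivity, by positivity, by positivity⟩
    ⟨by dsimp only; nlinarith [mul_nonneg hb1.le hl1, mul_nonneg hb2.le hl2],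
      by dsimp only; linarith, by dsimp only; linarith⟩

lemma phi_le_Phi (hmono : MonotoneOn (uncurry3 g) (Ici 0)) (hx : 0 ≤ x) (hy1 : 0 ≤ y1)
    (hy2 : 0 ≤ y2) (hD : memD s1 s2 b1 b2) {r : ℝ × ℝ × ℝ × ℝ} (hr : r ∈ A x y1 y2 s1 s2 b1 b2) :
    phi g x y1 y2 s1 s2 b1 b2 r ≤ Phi g x y1 y2 s1 s2 b1 b2 :=
  le_csSup (bddAbove_phi_image hmono hx hy1 hy2 hD) (mem_image_of_mem _ hr)

lemma Phi_eq_of_forall_le {q : ℝ × ℝ × ℝ × ℝ} (hq : q ∈ A x y1 y2 s1 s2 b1 b2)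
    (h : ∀ r ∈ A x y1 y2 s1 s2 b1 b2, phi g x y1 y2 s1 s2 b1 b2 r ≤ phi g x y1 y2 s1 s2 b1 b2 q) :
    Phi g x y1 y2 s1 s2 b1 b2 = phi g x y1 y2 s1 s2 b1 b2 q :=
  IsGreatest.csSup_eq ⟨mem_image_of_mem _ hq, forall_mem_image.2 h⟩

lemma eq_zero_of_mem_Asgn_zero {i : ℝ} {q : ℝ × ℝ × ℝ × ℝ}
    (hq : q ∈ Asgn 0 i x y1 y2 s1 s2 b1 b2) : q.1 = 0 ∧ q.2.2.1 = 0 := by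
  obtain ⟨⟨hl1, hl2, hm1, hm2, -⟩, hsign, -, hprod⟩ := hq
  have hlm : q.1 = q.2.2.1 := sub_eq_zero.1 (Real.sign_eq_zero_iff.1 hsign.symm)
  have hl : q.1 = 0 := by nlinarith [mul_nonneg hl2 hm2]
  exact ⟨hl, hlm ▸ hl⟩

lemma mem_Asgn_zero_congr {s1' b1' i : ℝ} {q : ℝ × ℝ × ℝ × ℝ}
    (hq : q ∈ Asgn 0 i x y1 y2 s1 s2 b1 b2) :
    q ∈ Asgn 0 i x y1 y2 s1' s2 b1' b2 ∧
      phi g x y1 y2 s1 s2 b1 b2 q = phi g x y1 y2 s1' s2 b1' b2 q := by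
  obtain ⟨hl, hm⟩ := eq_zero_of_mem_Asgn_zero hq
  obtain ⟨l1, l2, m1, m2⟩ := q
  simp only at hl hm
  subst hl hm
  simpa [Asgn, A, phi] using hq

lemma phi_le_phi_of_mem_Icc (hmono : MonotoneOn (uncurry3 g) (Ici 0)) {s : ℝ}
    (hs : s ∈ Icc s1 b1) {r : ℝ × ℝ × ℝ × ℝ} (hr : r ∈ A x y1 y2 s1 s2 b1 b2) :
    r ∈ A x y1 y2 s s2 s b2 ∧ phi g x y1 y2 s1 s2 b1 b2 r ≤ phi g x y1 y2 s s2 s b2 r := by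
  obtain ⟨hl1, hm1, hm1y, hf⟩ := mem_A_iff.1 hr
  have hc : s * r.1 - s * r.2.2.1 ≤ b1 * r.1 - s1 * r.2.2.1 := by
    nlinarith [mul_le_mul_of_nonneg_right hs.2 hl1, mul_le_mul_of_nonneg_right hs.1 hm1]
  refine ⟨mem_A_iff.2 ⟨hl1, hm1, hm1y, hf.of_le hc⟩, ?_⟩
  rw [phi_eq, phi_eq]
  exact hmono hf.2.2.2 (hf.of_le hc).2.2.2 (pos_le_pos hc)

lemma exists_mem_A_lt_phi {M l1 m1 : ℝ} (hl1 : 0 ≤ l1) (hm1 : 0 ≤ m1) (hm1y : m1 ≤ y1)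
    (h : Improves (uncurry3 g) (x, y1, y2) s2 b2 M (b1 * l1 - s1 * m1) (l1 - m1)) :
    ∃ r ∈ A x y1 y2 s1 s2 b1 b2, M < phi g x y1 y2 s1 s2 b1 b2 r := by
  obtain ⟨l2, m2, hf, hM⟩ := h
  exact ⟨(l1, l2, m1, m2), mem_A_iff.2 ⟨hl1, hm1, hm1y, hf⟩, by rwa [phi_eq]⟩

lemma phi_le_of_not_improves {s M : ℝ}
    (h : ∀ n, ¬ Improves (uncurry3 g) (x, y1, y2) s2 b2 M (s * n) n)
    {r : ℝ × ℝ × ℝ × ℝ} (hr : r ∈ A x y1 y2 s s2 s b2) : phi g x y1 y2 s s2 s b2 r ≤ M := by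
  obtain ⟨-, -, -, hf⟩ := mem_A_iff.1 hr
  rw [phi_eq]
  by_contra! hlt
  exact h (r.1 - r.2.2.1) ⟨r.2.1, r.2.2.2, by rwa [mul_sub], by rwa [mul_sub]⟩

lemma tset_subset_of_mem_Icc (hmono : MonotoneOn (uncurry3 g) (Ici 0)) (hD : memD s1 s2 b1 b2)
    {i s : ℝ} (hs : s ∈ Icc s1 b1) : tset g 0 i s s2 s b2 ⊆ tset g 0 i s1 s2 b1 b2 := by
  rintro ⟨x, y1, y2⟩ ⟨hx, hy1, hy2, q, hq, hPhi⟩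
  obtain ⟨hq', hphi⟩ := mem_Asgn_zero_congr (g := g) (s1' := s1) (b1' := b1) hq
  refine ⟨hx, hy1, hy2, q, hq', Phi_eq_of_forall_le hq'.1 fun r hr => ?_⟩
  obtain ⟨hr', hle⟩ := phi_le_phi_of_mem_Icc hmono hs hr
  rw [← hphi, ← hPhi]
  exact hle.trans (phi_le_Phi hmono hx hy1 hy2 ⟨hD.1.trans_le hs.1, le_rfl, hD.2.2⟩ hr')

lemma exists_mem_Icc_mem_tset (hconc : ConcaveOn ℝ (Ici 0) (uncurry3 g))
    (hmono : MonotoneOn (uncurry3 g) (Ici 0)) (hD : memD s1 s2 b1 b2) {i : ℝ} {v : ℝ × ℝ × ℝ}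
    (hv : v ∈ tset g 0 i s1 s2 b1 b2) : ∃ s ∈ Icc s1 b1, v ∈ tset g 0 i s s2 s b2 := by
  obtain ⟨x, y1, y2⟩ := v
  obtain ⟨hx, hy1, hy2, q, hq, hPhi⟩ := hv
  set M := phi g x y1 y2 s1 s2 b1 b2 q
  have hnot {c n l1 m1 : ℝ} (hl1 : 0 ≤ l1) (hm1 : 0 ≤ m1) (hm1y : m1 ≤ y1)
      (hc : c = b1 * l1 - s1 * m1) (hn : n = l1 - m1) :
      ¬ Improves (uncurry3 g) (x, y1, y2) s2 b2 M c n := fun h => by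
    subst hc hn
    obtain ⟨r, hr, hlt⟩ := exists_mem_A_lt_phi hl1 hm1 hm1y h
    exact (hPhi ▸ phi_le_Phi hmono hx hy1 hy2 hD hr).not_gt hlt
  have h0 := hnot (c := 0) (n := 0) le_rfl le_rfl hy1 (by ring) (by ring)
  have hsell : ¬ SellImproves (uncurry3 g) (x, y1, y2) s2 b2 M s1 := fun ⟨n, hn, h⟩ =>
    hnot le_rfl (neg_nonneg.2 hn.le) (by linarith [h.add_nonneg]) (by ring) (by ring) h
  have hbuy : ¬ BuyImproves (uncurry3 g) (x, y1, y2) s2 b2 M b1 := fun ⟨n, hn, h⟩ =>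
    hnot hn.le le_rfl hy1 (by ring) (by ring) h
  obtain ⟨s, hs, hsell_s, hbuy_s⟩ :=
    exists_shadowPrice hconc hmono ⟨hx, hy1, hy2⟩ hD.1 hD.2.1 h0 hsell hbuy
  obtain ⟨hq', hphi⟩ := mem_Asgn_zero_congr (g := g) (s1' := s) (b1' := s) hq
  refine ⟨s, hs, hx, hy1, hy2, q, hq', Phi_eq_of_forall_le hq'.1 fun r hr => ?_⟩
  rw [← hphi]
  exact phi_le_of_not_improves (not_improves_of_shadowPrice h0 hsell_s hbuy_s) hr

end TradingSets

end ShadowPrice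

theorem statement18_general
    (g : ℝ → ℝ → ℝ → ℝ)
    (hg : StrictConcaveOn ℝ {v : ℝ × ℝ × ℝ | 0 ≤ v.1 ∧ 0 ≤ v.2.1 ∧ 0 ≤ v.2.2}
      (fun v => g v.1 v.2.1 v.2.2))
    (hg1 : ∀ a aQ b c : ℝ, 0 ≤ a → 0 ≤ b → 0 ≤ c → a < aQ → g a b c < g aQ b c)
    (hg2 : ∀ a b bQ c : ℝ, 0 ≤ a → 0 ≤ b → 0 ≤ c → b < bQ → g a b c < g a bQ c)
    (hg3 : ∀ a b c cQ : ℝ, 0 ≤ a → 0 ≤ b → 0 ≤ c → c < cQ → g a b c < g a b cQ)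
    (s1 s2 b1 b2 : ℝ) (hD : memD s1 s2 b1 b2)
    (i : ℝ) :
    tset g 0 i s1 s2 b1 b2 = ⋃ s ∈ Set.Icc s1 b1, tset g 0 i s s2 s b2 := by
  have hmono := ShadowPrice.monotoneOn_uncurry3 hg1 hg2 hg3
  ext v
  simp only [mem_iUnion, exists_prop]
  exact ⟨ShadowPrice.exists_mem_Icc_mem_tset hg.concaveOn hmono hD,
    fun ⟨s, hs, hv⟩ => ShadowPrice.tset_subset_of_mem_Icc hmono hD hs hv⟩

/-- decomposition of the no-transaction zone for the first asset:
𝐭^{(0,i)}(s̲₁,s̲₂,s̄₁,s̄₂) = ⋃_{s ∈ [s̲₁,s̄₁]} 𝐭^{(0,i)}(s,s̲₂,s,s̄₂). -/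
theorem statement18
    (g : ℝ → ℝ → ℝ → ℝ)
    (hg : StrictConcaveOn ℝ {v : ℝ × ℝ × ℝ | 0 ≤ v.1 ∧ 0 ≤ v.2.1 ∧ 0 ≤ v.2.2}
      (fun v => g v.1 v.2.1 v.2.2))
    (hg1 : ∀ a aQ b c : ℝ, 0 ≤ a → 0 ≤ b → 0 ≤ c → a < aQ → g a b c < g aQ b c)
    (hg2 : ∀ a b bQ c : ℝ, 0 ≤ a → 0 ≤ b → 0 ≤ c → b < bQ → g a b c < g a bQ c)
    (hg3 : ∀ a b c cQ : ℝ, 0 ≤ a → 0 ≤ b → 0 ≤ c → c < cQ → g a b c < g a b cQ)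
    (s1 s2 b1 b2 : ℝ) (hD : memD s1 s2 b1 b2)
    (i : ℝ) (hi : i ∈ ({-1, 0, 1} : Set ℝ)) :
    tset g 0 i s1 s2 b1 b2 = ⋃ s ∈ Set.Icc s1 b1, tset g 0 i s s2 s b2 :=
  statement18_general g hg hg1 hg2 hg3 s1 s2 b1 b2 hD i
end

section
/- Assume (s̲₁,s̲₂,s̄₁,s̄₂) ∈ 𝔻, i ∈ {−1,0,1} and s̃ ∈ [s̲₂,s̄₂]. Then t^{(0,i)}(s̲₁',s̲₂,s̲₁',s̄₂) ∩ t^{(0,i)}(s̄₁',s̲₂,s̄₁',s̄₂) ⊆ t^{(0,i)}(s̃',s̲₂,s̃',s̄₂) for any 0 < s̲₁' ≤ s̃' ≤ s̄₁', and t^{(i,0)}(s̲₁,s̲₂,s̄₁,s̲₂) ∩ t^{(i,0)}(s̲₁,s̄₂,s̄₁,s̄₂) ⊆ t^{(i,0)}(s̲₁,s̃,s̄₁,s̃). -/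
open Set

/-- The image of the admissible set under φ is bounded above, assuming g is
(weakly) monotone in each coordinate. -/
lemma bddA (g : ℝ → ℝ → ℝ → ℝ)
    (mono1 : ∀ u u' v w : ℝ, 0 ≤ u → 0 ≤ v → 0 ≤ w → u ≤ u' → g u v w ≤ g u' v w)
    (mono2 : ∀ u v v' w : ℝ, 0 ≤ u → 0 ≤ v → 0 ≤ w → v ≤ v' → g u v w ≤ g u v' w)
    (mono3 : ∀ u v w w' : ℝ, 0 ≤ u → 0 ≤ v → 0 ≤ w → w ≤ w' → g u v w ≤ g u v w')
    (x y1 y2 s1 s2 b1 b2 : ℝ) (hx : 0 ≤ x) (hy1 : 0 ≤ y1) (hy2 : 0 ≤ y2)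
    (hs1 : 0 < s1) (h1 : s1 ≤ b1) (hs2 : 0 < s2) (h2 : s2 ≤ b2) :
    BddAbove (phi g x y1 y2 s1 s2 b1 b2 '' A x y1 y2 s1 s2 b1 b2) := by
  have hb1 : 0 < b1 := hs1.trans_le h1
  have hb2 : 0 < b2 := hs2.trans_le h2
  set C := x + s1 * y1 + s2 * y2 with hCdef
  have hC : 0 ≤ C := by positivity
  refine ⟨g C (y1 + C / b1) (y2 + C / b2), ?_⟩
  rintro z ⟨q, hq, rfl⟩
  obtain ⟨hl1, hl2, hm1, hm2, hX, hY1, hY2, hm1y, hm2y⟩ := hq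
  simp only [phi]
  have hsm1 : s1 * q.2.2.1 ≤ s1 * y1 := mul_le_mul_of_nonneg_left hm1y hs1.le
  have hsm2 : s2 * q.2.2.2 ≤ s2 * y2 := mul_le_mul_of_nonneg_left hm2y hs2.le
  have hbl1 : 0 ≤ b1 * q.1 := mul_nonneg hb1.le hl1
  have hbl2 : 0 ≤ b2 * q.2.1 := mul_nonneg hb2.le hl2
  have hXC : x + s1 * q.2.2.1 + s2 * q.2.2.2 - b1 * q.1 - b2 * q.2.1 ≤ C := by
    simp only [hCdef]; linarith
  have hl1C : q.1 ≤ C / b1 := by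
    rw [le_div_iff₀ hb1]
    nlinarith
  have hl2C : q.2.1 ≤ C / b2 := by
    rw [le_div_iff₀ hb2]
    nlinarith
  have hY1C : y1 - q.2.2.1 + q.1 ≤ y1 + C / b1 := by linarith
  have hY2C : y2 - q.2.2.2 + q.2.1 ≤ y2 + C / b2 := by linarith
  have hB1 : 0 ≤ y1 + C / b1 := by positivity
  have hB2 : 0 ≤ y2 + C / b2 := by positivity
  calc g (x + s1 * q.2.2.1 + s2 * q.2.2.2 - b1 * q.1 - b2 * q.2.1)
        (y1 - q.2.2.1 + q.1) (y2 - q.2.2.2 + q.2.1)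
      ≤ g C (y1 - q.2.2.1 + q.1) (y2 - q.2.2.2 + q.2.1) :=
        mono1 _ _ _ _ hX hY1 hY2 hXC
    _ ≤ g C (y1 + C / b1) (y2 - q.2.2.2 + q.2.1) := mono2 _ _ _ _ hC hY1 hY2 hY1C
    _ ≤ g C (y1 + C / b1) (y2 + C / b2) := mono3 _ _ _ _ hC hB1 hY2 hY2C

/-- Key lemma, asset-1 version: with asset 1 frictionless, the intersection of the
(0,i)-trading sets at prices a ≤ c is contained in that at any intermediate price t. -/
lemma keyAux (g : ℝ → ℝ → ℝ → ℝ)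
    (mono1 : ∀ u u' v w : ℝ, 0 ≤ u → 0 ≤ v → 0 ≤ w → u ≤ u' → g u v w ≤ g u' v w)
    (mono2 : ∀ u v v' w : ℝ, 0 ≤ u → 0 ≤ v → 0 ≤ w → v ≤ v' → g u v w ≤ g u v' w)
    (mono3 : ∀ u v w w' : ℝ, 0 ≤ u → 0 ≤ v → 0 ≤ w → w ≤ w' → g u v w ≤ g u v w')
    (s2 b2 : ℝ) (hs2 : 0 < s2) (h2 : s2 ≤ b2)
    (i a t c : ℝ) (ha : 0 < a) (hat : a ≤ t) (htc : t ≤ c) :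
    tset g 0 i a s2 a b2 ∩ tset g 0 i c s2 c b2 ⊆ tset g 0 i t s2 t b2 := by
  have ht : 0 < t := ha.trans_le hat
  have hc : 0 < c := ht.trans_le htc
  rintro ⟨x, y1, y2⟩ ⟨⟨hx, hy1, hy2, qa, ⟨hqaA, hsa1, hsa2, hpa⟩, hPa⟩,
    ⟨-, -, -, qc, ⟨hqcA, hsc1, hsc2, hpc⟩, hPc⟩⟩
  obtain ⟨hal1, hal2, ham1, ham2, haX, haY1, haY2, ham1y, ham2y⟩ := hqaA
  obtain ⟨hcl1, hcl2, hcm1, hcm2, hcX, hcY1, hcY2, hcm1y, hcm2y⟩ := hqcA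
  dsimp only at hx hy1 hy2 hPa hPc haX haY1 haY2 ham1y ham2y hcX hcY1 hcY2 hcm1y hcm2y
  -- qa and qc involve no trade in asset 1
  have heqa : qa.1 = qa.2.2.1 := by
    have h := hsa1.symm; rwa [Real.sign_eq_zero_iff, sub_eq_zero] at h
  have ham10 : qa.2.2.1 = 0 := by
    have h := hpa
    rw [heqa] at h
    have h22 : 0 ≤ qa.2.1 * qa.2.2.2 := mul_nonneg hal2 ham2
    have hz : qa.2.2.1 * qa.2.2.1 = 0 :=
      le_antisymm (by linarith) (mul_self_nonneg _)
    exact mul_self_eq_zero.mp hz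
  have hal10 : qa.1 = 0 := by rw [heqa, ham10]
  have heqc : qc.1 = qc.2.2.1 := by
    have h := hsc1.symm; rwa [Real.sign_eq_zero_iff, sub_eq_zero] at h
  have hcm10 : qc.2.2.1 = 0 := by
    have h := hpc
    rw [heqc] at h
    have h22 : 0 ≤ qc.2.1 * qc.2.2.2 := mul_nonneg hcl2 hcm2
    have hz : qc.2.2.1 * qc.2.2.1 = 0 :=
      le_antisymm (by linarith) (mul_self_nonneg _)
    exact mul_self_eq_zero.mp hz
  have hcl10 : qc.1 = 0 := by rw [heqc, hcm10]
  -- admissibility and value are independent of the asset-1 price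
  have hAany : ∀ s : ℝ, qa ∈ A x y1 y2 s s2 s b2 := by
    intro s
    refine ⟨hal1, hal2, ham1, ham2, ?_, haY1, haY2, ham1y, ham2y⟩
    simp only [hal10, ham10, mul_zero] at haX ⊢
    linarith
  have hAanyc : ∀ s : ℝ, qc ∈ A x y1 y2 s s2 s b2 := by
    intro s
    refine ⟨hcl1, hcl2, hcm1, hcm2, ?_, hcY1, hcY2, hcm1y, hcm2y⟩
    simp only [hcl10, hcm10, mul_zero] at hcX ⊢
    linarith
  have hphia : ∀ s s' : ℝ, phi g x y1 y2 s s2 s b2 qa = phi g x y1 y2 s' s2 s' b2 qa := by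
    intro s s'; simp [phi, hal10, ham10]
  have hphic : ∀ s s' : ℝ, phi g x y1 y2 s s2 s b2 qc = phi g x y1 y2 s' s2 s' b2 qc := by
    intro s s'; simp [phi, hcl10, hcm10]
  have bddS : ∀ s : ℝ, 0 < s →
      BddAbove (phi g x y1 y2 s s2 s b2 '' A x y1 y2 s s2 s b2) :=
    fun s hs => bddA g mono1 mono2 mono3 x y1 y2 s s2 s b2 hx hy1 hy2 hs le_rfl hs2 h2
  -- the two endpoint values agree
  have hPaPc : Phi g x y1 y2 a s2 a b2 = Phi g x y1 y2 c s2 c b2 := by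
    apply le_antisymm
    · rw [hPa, hphia a c]
      exact le_csSup (bddS c hc) ⟨qa, hAany c, rfl⟩
    · rw [hPc, hphic c a]
      exact le_csSup (bddS a ha) ⟨qc, hAanyc a, rfl⟩
  -- the value at t is at most the endpoint value
  have hup : Phi g x y1 y2 t s2 t b2 ≤ Phi g x y1 y2 a s2 a b2 := by
    simp only [Phi]
    refine csSup_le ⟨phi g x y1 y2 t s2 t b2 qa, ⟨qa, hAany t, rfl⟩⟩ ?_
    rintro z ⟨q, hq, rfl⟩
    obtain ⟨hl1, hl2, hm1, hm2, hX, hY1, hY2, hm1y, hm2y⟩ := hq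
    rcases le_total q.2.2.1 q.1 with hcase | hcase
    · -- net purchase of asset 1: cheaper at price a
      have hcash : x + t * q.2.2.1 + s2 * q.2.2.2 - t * q.1 - b2 * q.2.1
          ≤ x + a * q.2.2.1 + s2 * q.2.2.2 - a * q.1 - b2 * q.2.1 := by
        rw [← sub_nonneg]
        have hkey : x + a * q.2.2.1 + s2 * q.2.2.2 - a * q.1 - b2 * q.2.1
            - (x + t * q.2.2.1 + s2 * q.2.2.2 - t * q.1 - b2 * q.2.1)
            = (t - a) * (q.1 - q.2.2.1) := by ring
        rw [hkey]
        exact mul_nonneg (sub_nonneg.mpr hat) (sub_nonneg.mpr hcase)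
      have hmem : q ∈ A x y1 y2 a s2 a b2 :=
        ⟨hl1, hl2, hm1, hm2, le_trans hX hcash, hY1, hY2, hm1y, hm2y⟩
      refine le_trans ?_ (le_csSup (bddS a ha) ⟨q, hmem, rfl⟩)
      simp only [phi]
      exact mono1 _ _ _ _ hX hY1 hY2 hcash
    · -- net sale of asset 1: better at price c
      have hcash : x + t * q.2.2.1 + s2 * q.2.2.2 - t * q.1 - b2 * q.2.1
          ≤ x + c * q.2.2.1 + s2 * q.2.2.2 - c * q.1 - b2 * q.2.1 := by
        rw [← sub_nonneg]
        have hkey : x + c * q.2.2.1 + s2 * q.2.2.2 - c * q.1 - b2 * q.2.1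
            - (x + t * q.2.2.1 + s2 * q.2.2.2 - t * q.1 - b2 * q.2.1)
            = (c - t) * (q.2.2.1 - q.1) := by ring
        rw [hkey]
        exact mul_nonneg (sub_nonneg.mpr htc) (sub_nonneg.mpr hcase)
      have hmem : q ∈ A x y1 y2 c s2 c b2 :=
        ⟨hl1, hl2, hm1, hm2, le_trans hX hcash, hY1, hY2, hm1y, hm2y⟩
      refine le_trans (le_trans ?_ (le_csSup (bddS c hc) ⟨q, hmem, rfl⟩)) hPaPc.ge
      simp only [phi]
      exact mono1 _ _ _ _ hX hY1 hY2 hcash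
  refine ⟨hx, hy1, hy2, qa, ⟨hAany t, hsa1, hsa2, hpa⟩, ?_⟩
  apply le_antisymm
  · calc Phi g x y1 y2 t s2 t b2 ≤ Phi g x y1 y2 a s2 a b2 := hup
      _ = phi g x y1 y2 a s2 a b2 qa := hPa
      _ = phi g x y1 y2 t s2 t b2 qa := hphia a t
  · exact le_csSup (bddS t ht) ⟨qa, hAany t, rfl⟩

/-- Key lemma, asset-2 version: with asset 2 frictionless, the intersection of the
(i,0)-trading sets at prices a ≤ c is contained in that at any intermediate price t. -/
lemma keyAux2 (g : ℝ → ℝ → ℝ → ℝ)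
    (mono1 : ∀ u u' v w : ℝ, 0 ≤ u → 0 ≤ v → 0 ≤ w → u ≤ u' → g u v w ≤ g u' v w)
    (mono2 : ∀ u v v' w : ℝ, 0 ≤ u → 0 ≤ v → 0 ≤ w → v ≤ v' → g u v w ≤ g u v' w)
    (mono3 : ∀ u v w w' : ℝ, 0 ≤ u → 0 ≤ v → 0 ≤ w → w ≤ w' → g u v w ≤ g u v w')
    (s1 b1 : ℝ) (hs1 : 0 < s1) (h1 : s1 ≤ b1)
    (i a t c : ℝ) (ha : 0 < a) (hat : a ≤ t) (htc : t ≤ c) :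
    tset g i 0 s1 a b1 a ∩ tset g i 0 s1 c b1 c ⊆ tset g i 0 s1 t b1 t := by
  have ht : 0 < t := ha.trans_le hat
  have hc : 0 < c := ht.trans_le htc
  rintro ⟨x, y1, y2⟩ ⟨⟨hx, hy1, hy2, qa, ⟨hqaA, hsa1, hsa2, hpa⟩, hPa⟩,
    ⟨-, -, -, qc, ⟨hqcA, hsc1, hsc2, hpc⟩, hPc⟩⟩
  obtain ⟨hal1, hal2, ham1, ham2, haX, haY1, haY2, ham1y, ham2y⟩ := hqaA
  obtain ⟨hcl1, hcl2, hcm1, hcm2, hcX, hcY1, hcY2, hcm1y, hcm2y⟩ := hqcA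
  dsimp only at hx hy1 hy2 hPa hPc haX haY1 haY2 ham1y ham2y hcX hcY1 hcY2 hcm1y hcm2y
  -- qa and qc involve no trade in asset 2
  have heqa : qa.2.1 = qa.2.2.2 := by
    have h := hsa2.symm; rwa [Real.sign_eq_zero_iff, sub_eq_zero] at h
  have ham20 : qa.2.2.2 = 0 := by
    have h := hpa
    rw [heqa] at h
    have h11 : 0 ≤ qa.1 * qa.2.2.1 := mul_nonneg hal1 ham1
    have hz : qa.2.2.2 * qa.2.2.2 = 0 :=
      le_antisymm (by linarith) (mul_self_nonneg _)
    exact mul_self_eq_zero.mp hz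
  have hal20 : qa.2.1 = 0 := by rw [heqa, ham20]
  have heqc : qc.2.1 = qc.2.2.2 := by
    have h := hsc2.symm; rwa [Real.sign_eq_zero_iff, sub_eq_zero] at h
  have hcm20 : qc.2.2.2 = 0 := by
    have h := hpc
    rw [heqc] at h
    have h11 : 0 ≤ qc.1 * qc.2.2.1 := mul_nonneg hcl1 hcm1
    have hz : qc.2.2.2 * qc.2.2.2 = 0 :=
      le_antisymm (by linarith) (mul_self_nonneg _)
    exact mul_self_eq_zero.mp hz
  have hcl20 : qc.2.1 = 0 := by rw [heqc, hcm20]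
  -- admissibility and value are independent of the asset-2 price
  have hAany : ∀ s : ℝ, qa ∈ A x y1 y2 s1 s b1 s := by
    intro s
    refine ⟨hal1, hal2, ham1, ham2, ?_, haY1, haY2, ham1y, ham2y⟩
    simp only [hal20, ham20, mul_zero] at haX ⊢
    linarith
  have hAanyc : ∀ s : ℝ, qc ∈ A x y1 y2 s1 s b1 s := by
    intro s
    refine ⟨hcl1, hcl2, hcm1, hcm2, ?_, hcY1, hcY2, hcm1y, hcm2y⟩
    simp only [hcl20, hcm20, mul_zero] at hcX ⊢
    linarith
  have hphia : ∀ s s' : ℝ, phi g x y1 y2 s1 s b1 s qa = phi g x y1 y2 s1 s' b1 s' qa := by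
    intro s s'; simp [phi, hal20, ham20]
  have hphic : ∀ s s' : ℝ, phi g x y1 y2 s1 s b1 s qc = phi g x y1 y2 s1 s' b1 s' qc := by
    intro s s'; simp [phi, hcl20, hcm20]
  have bddS : ∀ s : ℝ, 0 < s →
      BddAbove (phi g x y1 y2 s1 s b1 s '' A x y1 y2 s1 s b1 s) :=
    fun s hs => bddA g mono1 mono2 mono3 x y1 y2 s1 s b1 s hx hy1 hy2 hs1 h1 hs le_rfl
  -- the two endpoint values agree
  have hPaPc : Phi g x y1 y2 s1 a b1 a = Phi g x y1 y2 s1 c b1 c := by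
    apply le_antisymm
    · rw [hPa, hphia a c]
      exact le_csSup (bddS c hc) ⟨qa, hAany c, rfl⟩
    · rw [hPc, hphic c a]
      exact le_csSup (bddS a ha) ⟨qc, hAanyc a, rfl⟩
  -- the value at t is at most the endpoint value
  have hup : Phi g x y1 y2 s1 t b1 t ≤ Phi g x y1 y2 s1 a b1 a := by
    simp only [Phi]
    refine csSup_le ⟨phi g x y1 y2 s1 t b1 t qa, ⟨qa, hAany t, rfl⟩⟩ ?_
    rintro z ⟨q, hq, rfl⟩
    obtain ⟨hl1, hl2, hm1, hm2, hX, hY1, hY2, hm1y, hm2y⟩ := hq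
    rcases le_total q.2.2.2 q.2.1 with hcase | hcase
    · -- net purchase of asset 2: cheaper at price a
      have hcash : x + s1 * q.2.2.1 + t * q.2.2.2 - b1 * q.1 - t * q.2.1
          ≤ x + s1 * q.2.2.1 + a * q.2.2.2 - b1 * q.1 - a * q.2.1 := by
        rw [← sub_nonneg]
        have hkey : x + s1 * q.2.2.1 + a * q.2.2.2 - b1 * q.1 - a * q.2.1
            - (x + s1 * q.2.2.1 + t * q.2.2.2 - b1 * q.1 - t * q.2.1)
            = (t - a) * (q.2.1 - q.2.2.2) := by ring
        rw [hkey]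
        exact mul_nonneg (sub_nonneg.mpr hat) (sub_nonneg.mpr hcase)
      have hmem : q ∈ A x y1 y2 s1 a b1 a :=
        ⟨hl1, hl2, hm1, hm2, le_trans hX hcash, hY1, hY2, hm1y, hm2y⟩
      refine le_trans ?_ (le_csSup (bddS a ha) ⟨q, hmem, rfl⟩)
      simp only [phi]
      exact mono1 _ _ _ _ hX hY1 hY2 hcash
    · -- net sale of asset 2: better at price c
      have hcash : x + s1 * q.2.2.1 + t * q.2.2.2 - b1 * q.1 - t * q.2.1
          ≤ x + s1 * q.2.2.1 + c * q.2.2.2 - b1 * q.1 - c * q.2.1 := by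
        rw [← sub_nonneg]
        have hkey : x + s1 * q.2.2.1 + c * q.2.2.2 - b1 * q.1 - c * q.2.1
            - (x + s1 * q.2.2.1 + t * q.2.2.2 - b1 * q.1 - t * q.2.1)
            = (c - t) * (q.2.2.2 - q.2.1) := by ring
        rw [hkey]
        exact mul_nonneg (sub_nonneg.mpr htc) (sub_nonneg.mpr hcase)
      have hmem : q ∈ A x y1 y2 s1 c b1 c :=
        ⟨hl1, hl2, hm1, hm2, le_trans hX hcash, hY1, hY2, hm1y, hm2y⟩
      refine le_trans (le_trans ?_ (le_csSup (bddS c hc) ⟨q, hmem, rfl⟩)) hPaPc.ge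
      simp only [phi]
      exact mono1 _ _ _ _ hX hY1 hY2 hcash
  refine ⟨hx, hy1, hy2, qa, ⟨hAany t, hsa1, hsa2, hpa⟩, ?_⟩
  apply le_antisymm
  · calc Phi g x y1 y2 s1 t b1 t ≤ Phi g x y1 y2 s1 a b1 a := hup
      _ = phi g x y1 y2 s1 a b1 a qa := hPa
      _ = phi g x y1 y2 s1 t b1 t qa := hphia a t
  · exact le_csSup (bddS t ht) ⟨qa, hAany t, rfl⟩

/-- intersections of no-transaction zones at the endpoint prices are contained
in the no-transaction zone at any intermediate price, for each of the two assets. -/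
theorem statement19
    (g : ℝ → ℝ → ℝ → ℝ)
    (hg : StrictConcaveOn ℝ {v : ℝ × ℝ × ℝ | 0 ≤ v.1 ∧ 0 ≤ v.2.1 ∧ 0 ≤ v.2.2}
      (fun v => g v.1 v.2.1 v.2.2))
    (hg1 : ∀ a aQ b c : ℝ, 0 ≤ a → 0 ≤ b → 0 ≤ c → a < aQ → g a b c < g aQ b c)
    (hg2 : ∀ a b bQ c : ℝ, 0 ≤ a → 0 ≤ b → 0 ≤ c → b < bQ → g a b c < g a bQ c)
    (hg3 : ∀ a b c cQ : ℝ, 0 ≤ a → 0 ≤ b → 0 ≤ c → c < cQ → g a b c < g a b cQ)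
    (s1 s2 b1 b2 : ℝ) (hD : memD s1 s2 b1 b2)
    (i : ℝ) (hi : i ∈ ({-1, 0, 1} : Set ℝ)) :
    (∀ a t c : ℝ, 0 < a → a ≤ t → t ≤ c →
      tset g 0 i a s2 a b2 ∩ tset g 0 i c s2 c b2 ⊆ tset g 0 i t s2 t b2) ∧
    (∀ t ∈ Set.Icc s2 b2,
      tset g i 0 s1 s2 b1 s2 ∩ tset g i 0 s1 b2 b1 b2 ⊆ tset g i 0 s1 t b1 t) := by
  have mono1 : ∀ u u' v w : ℝ, 0 ≤ u → 0 ≤ v → 0 ≤ w → u ≤ u' → g u v w ≤ g u' v w := by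
    intro u u' v w hu hv hw h
    rcases h.lt_or_eq with h' | h'
    · exact (hg1 u u' v w hu hv hw h').le
    · rw [h']
  have mono2 : ∀ u v v' w : ℝ, 0 ≤ u → 0 ≤ v → 0 ≤ w → v ≤ v' → g u v w ≤ g u v' w := by
    intro u v v' w hu hv hw h
    rcases h.lt_or_eq with h' | h'
    · exact (hg2 u v v' w hu hv hw h').le
    · rw [h']
  have mono3 : ∀ u v w w' : ℝ, 0 ≤ u → 0 ≤ v → 0 ≤ w → w ≤ w' → g u v w ≤ g u v w' := by
    intro u v w w' hu hv hw h
    rcases h.lt_or_eq with h' | h'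
    · exact (hg3 u v w w' hu hv hw h').le
    · rw [h']
  obtain ⟨hs1, h1, hs2, h2⟩ := hD
  refine ⟨fun a t c ha hat htc =>
      keyAux g mono1 mono2 mono3 s2 b2 hs2 h2 i a t c ha hat htc,
    fun t htm =>
      keyAux2 g mono1 mono2 mono3 s1 b1 hs1 h1 i s2 t b2 hs2 htm.1 htm.2⟩
end
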